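/- arXiv:2503.21526 — 2 statements merged into one kernel-verified Lean document; each statement's English description precedes it below -/
import Mathlib

section
/- Let G = (V,E) be a directed acyclic graph (DAG), let τ be a tiered ordering of V consistent with G, and let A, B ∈ V be two distinct nodes. Then A and B are d-separated in G by some subset of V \ {A,B} if and only if they are d-separated by some set S ⊆ past^τ_V(A) \ {A,B} or by some set S' ⊆ past^τ_V(B) \ {A,B}. -/
namespace Tiered

/-- Edge marks: tail, arrowhead, or circle. -/
inductive EMark : Type
  | tail : EMark
  | arrow : EMark
  | circ : EMark
  deriving DecidableEq

/-- A partial mixed graph (PMG): `mark a b` is the edge mark at `b` on the edge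
between `a` and `b` (`none` if `a` and `b` are not adjacent).  There is at most
one edge between any pair of nodes, and no self-loops. -/
structure PMG (V : Type) where
  mark : V → V → Option EMark
  symm_adj : ∀ a b, (mark a b).isSome ↔ (mark b a).isSome
  loopless : ∀ a, mark a a = none

namespace PMG

variable {V : Type}

def Adj (G : PMG V) (a b : V) : Prop := (G.mark a b).isSome

def adjSet (G : PMG V) (a : V) : Set V := {b | G.Adj a b}

/-- arrowhead at `b` on the edge between `a` and `b`. -/
def arrowAt (G : PMG V) (a b : V) : Prop := G.mark a b = some EMark.arrow

/-- tail at `b` on the edge between `a` and `b`. -/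
def tailAt (G : PMG V) (a b : V) : Prop := G.mark a b = some EMark.tail

/-- circle at `b` on the edge between `a` and `b`. -/
def circAt (G : PMG V) (a b : V) : Prop := G.mark a b = some EMark.circ

/-- directed edge `a → b`. -/
def dirEdge (G : PMG V) (a b : V) : Prop := G.arrowAt a b ∧ G.tailAt b a

/-- bidirected edge `a ↔ b`. -/
def bidirEdge (G : PMG V) (a b : V) : Prop := G.arrowAt a b ∧ G.arrowAt b a

/-- non-directed edge `a ∘—∘ b`. -/
def undirEdge (G : PMG V) (a b : V) : Prop := G.circAt a b ∧ G.circAt b a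

/-- `a` is an ancestor of `b` (reflexively), i.e. there is a directed path from `a` to `b`. -/
def Anc (G : PMG V) (a b : V) : Prop := Relation.ReflTransGen G.dirEdge a b

def IsPath (G : PMG V) (p : List V) : Prop :=
  2 ≤ p.length ∧ p.Nodup ∧ p.Chain' G.Adj

def PathBtw (G : PMG V) (a b : V) (p : List V) : Prop :=
  G.IsPath p ∧ p.head? = some a ∧ p.getLast? = some b

/-- `y` is a collider on a path segment `x *→ y ←* z`. -/
def Collider (G : PMG V) (x y z : V) : Prop := G.arrowAt x y ∧ G.arrowAt z y

/-- A path is m-connecting given `S` when every collider on it is in `S` or has a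
descendant in `S`, and no non-collider on it is in `S`. -/
def MConnPath (G : PMG V) (S : Set V) (p : List V) : Prop :=
  ∀ x y z : V, [x, y, z] <:+: p →
    (G.Collider x y z → ∃ d ∈ S, G.Anc y d) ∧
    (¬ G.Collider x y z → y ∉ S)

def MConn (G : PMG V) (a b : V) (S : Set V) : Prop :=
  ∃ p, G.PathBtw a b p ∧ G.MConnPath S p

/-- m-separation (= d-separation for DAGs). -/
def MSep (G : PMG V) (a b : V) (S : Set V) : Prop := ¬ G.MConn a b S

def NoCircles (G : PMG V) : Prop := ∀ a b, G.mark a b ≠ some EMark.circ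

/-- Every edge is directed or bidirected (a mixed graph). -/
def MixedEdges (G : PMG V) : Prop :=
  ∀ a b, G.Adj a b → G.dirEdge a b ∨ G.dirEdge b a ∨ G.bidirEdge a b

/-- No directed cycles and no almost directed cycles. -/
def Ancestral (G : PMG V) : Prop :=
  (∀ a, ¬ Relation.TransGen G.dirEdge a a) ∧
  (∀ a b, G.bidirEdge a b → ¬ Relation.TransGen G.dirEdge a b)

/-- Inducing path between `a` and `b`: every non-endpoint node is a collider and
an ancestor of `a` or of `b`. -/
def InducingPathBtw (G : PMG V) (a b : V) (p : List V) : Prop :=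
  G.PathBtw a b p ∧
  ∀ x y z, [x, y, z] <:+: p → G.Collider x y z ∧ (G.Anc y a ∨ G.Anc y b)

/-- Inducing path between `a` and `b` with respect to a set `L`. -/
def InducingPathRel (G : PMG V) (L : Set V) (a b : V) (p : List V) : Prop :=
  G.PathBtw a b p ∧
  ∀ x y z, [x, y, z] <:+: p →
    (G.Collider x y z ∨ y ∈ L) ∧ (G.Collider x y z → G.Anc y a ∨ G.Anc y b)

def Maximal (G : PMG V) : Prop :=
  ∀ a b, a ≠ b → ¬ G.Adj a b → ¬ ∃ p, G.InducingPathBtw a b p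

/-- Maximal ancestral graph. -/
def IsMAG (G : PMG V) : Prop := G.MixedEdges ∧ G.Ancestral ∧ G.Maximal

/-- Directed acyclic graph (all edges directed, no directed cycles). -/
def IsDAG (G : PMG V) : Prop :=
  (∀ a b, G.Adj a b → G.dirEdge a b ∨ G.dirEdge b a) ∧
  ∀ a, ¬ Relation.TransGen G.dirEdge a a

def sameSkel (G H : PMG V) : Prop := ∀ a b, G.Adj a b ↔ H.Adj a b

def MarkEq (G H : PMG V) : Prop := ∀ a b, G.mark a b = H.mark a b

/-- Markov equivalence: same (m-)separations. -/
def MarkovEquiv (G H : PMG V) : Prop := ∀ a b S, G.MSep a b S ↔ H.MSep a b S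

end PMG

variable {V : Type}

/-- the past of a node relative to a tiered ordering. -/
def past (τ : V → ℕ) (a : V) : Set V := {w | τ w ≤ τ a}

/-- the past of a pair of nodes relative to a tiered ordering. -/
def past2 (τ : V → ℕ) (a b : V) : Set V := {w | τ w ≤ max (τ a) (τ b)}

/-- a tiered ordering into tiers `{1, …, T}`, `T ≤ |V|`. -/
def IsTiered [Fintype V] (τ : V → ℕ) (T : ℕ) : Prop :=
  1 ≤ T ∧ T ≤ Fintype.card V ∧ ∀ v, τ v ∈ Finset.Icc 1 T

/-- A graph encodes the tiered background knowledge of `τ`: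
no directed edge `b → a` with `τ a < τ b`. -/
def TieredConsistent (G : PMG V) (τ : V → ℕ) : Prop :=
  ∀ a b, τ a < τ b → ¬ G.dirEdge b a

/-- `M'` is a MAG Markov equivalent to `M`. -/
def InEquivClass (M M' : PMG V) : Prop := M'.IsMAG ∧ PMG.MarkovEquiv M M'

/-- `P` is the (maximally informative) PAG of the MAG `M`. -/
def IsPAGof (P M : PMG V) : Prop :=
  M.IsMAG ∧ PMG.sameSkel P M ∧
  ∀ a b, P.Adj a b →
    ((P.mark a b = some EMark.arrow) ↔
      ∀ M', InEquivClass M M' → M'.mark a b = some EMark.arrow) ∧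
    ((P.mark a b = some EMark.tail) ↔
      ∀ M', InEquivClass M M' → M'.mark a b = some EMark.tail)

def IsPAG (P : PMG V) : Prop := ∃ M, IsPAGof P M

/-- the class `[P]` of MAGs represented by the PAG `P`. -/
def classOf (P : PMG V) : Set (PMG V) := {M | IsPAGof P M}

/-- a PAG is consistent with a tiered ordering if some MAG in its class encodes it. -/
def PAGConsistent (P : PMG V) (τ : V → ℕ) : Prop :=
  ∃ M ∈ classOf P, TieredConsistent M τ

/-- `dsep_G(A,B)` (Spirtes et al.): nodes reachable from `A` by a path whose
non-endpoint nodes are ancestors of `A` or `B` and whose consecutive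
non-endpoint nodes are joined by bidirected edges. -/
def dsepSet (G : PMG V) (A B : V) : Set V :=
  {v | v ≠ A ∧ v ≠ B ∧ ∃ p : List V, G.PathBtw A v p ∧
    (∀ y ∈ (p.drop 1).dropLast, G.Anc y A ∨ G.Anc y B) ∧
    ((p.drop 1).dropLast).Chain' G.bidirEdge}

def UnshTriple (G : PMG V) (x y z : V) : Prop :=
  x ≠ z ∧ G.Adj x y ∧ G.Adj y z ∧ ¬ G.Adj x z

def DefNonCollider (G : PMG V) (x y z : V) : Prop := G.tailAt x y ∨ G.tailAt z y

def DirectedList (G : PMG V) (p : List V) : Prop := p.Chain' G.dirEdge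

/-- Possible-D-SEP(A,B) in a partial mixed graph. -/
def possdsep (G : PMG V) (A B : V) : Set V :=
  {v | v ≠ A ∧ ∃ p, G.PathBtw A v p ∧ ¬ DirectedList G p ∧
    ∀ x y z, [x, y, z] <:+: p →
      G.Collider x y z ∨ (DefNonCollider G x y z ∧ G.Adj x z)}

/-- The refinement `pds` of Possible-D-SEP (Colombo et al.): nodes of
Possible-D-SEP(A,B) lying on a path between `A` and `B`. -/
def pds (G : PMG V) (A B : V) : Set V :=
  {v | v ∈ possdsep G A B ∧ ∃ q, G.PathBtw A B q ∧ v ∈ q}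

/-! ### Orientation rules R1–R4, R8–R10 -/

/-- `G'` is `G` with the single mark at `y` on the edge `x–y` set to `m`. -/
def SetMark (G G' : PMG V) (x y : V) (m : EMark) : Prop :=
  G'.mark x y = some m ∧ ∀ u v, ¬ (u = x ∧ v = y) → G'.mark u v = G.mark u v

/-- `G'` is `G` with the edge `x–y` given mark `mAtY` at `y` and `mAtX` at `x`. -/
def SetEdge (G G' : PMG V) (x y : V) (mAtY mAtX : EMark) : Prop :=
  G'.mark x y = some mAtY ∧ G'.mark y x = some mAtX ∧
  ∀ u v, ¬ (u = x ∧ v = y) → ¬ (u = y ∧ v = x) → G'.mark u v = G.mark u v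

/-- R1: `a *→ b ∘—* c`, `a, c` non-adjacent ⟹ `b → c`. -/
def R1Step (G G' : PMG V) : Prop :=
  ∃ a b c, a ≠ c ∧ ¬ G.Adj a c ∧ G.arrowAt a b ∧ G.circAt c b ∧
    SetEdge G G' b c EMark.arrow EMark.tail

/-- R2: `a → b *→ c` or `a *→ b → c`, and `a *—∘ c` ⟹ `a *→ c`. -/
def R2Step (G G' : PMG V) : Prop :=
  ∃ a b c, ((G.dirEdge a b ∧ G.arrowAt b c) ∨ (G.arrowAt a b ∧ G.dirEdge b c)) ∧
    G.circAt a c ∧ SetMark G G' a c EMark.arrow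

/-- R3: `a *→ b ←* c`, `a *—∘ d ∘—* c`, `a,c` non-adjacent, `d *—∘ b` ⟹ `d *→ b`. -/
def R3Step (G G' : PMG V) : Prop :=
  ∃ a b c d, a ≠ c ∧ ¬ G.Adj a c ∧ G.arrowAt a b ∧ G.arrowAt c b ∧
    G.circAt a d ∧ G.circAt c d ∧ G.circAt d b ∧
    SetMark G G' d b EMark.arrow

/-- a discriminating path `p = ⟨a, …, b, c, d⟩` for `c`. -/
def DiscPath (G : PMG V) (p : List V) (a b c d : V) : Prop :=
  G.PathBtw a d p ∧ 4 ≤ p.length ∧ ¬ G.Adj a d ∧ [b, c, d] <:+ p ∧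
  ∀ x y z, [x, y, z] <:+: p → y ≠ c → G.Collider x y z ∧ G.dirEdge y d

/-- R4 (discriminating paths), parametrised by the recorded separating sets. -/
def R4Step (hasSep : V → V → Prop) (inSep : V → V → V → Prop) (G G' : PMG V) : Prop :=
  ∃ p a b c d, DiscPath G p a b c d ∧ G.circAt d c ∧
    ((hasSep a d ∧ inSep a d c ∧ SetEdge G G' c d EMark.arrow EMark.tail) ∨
     (¬ (hasSep a d ∧ inSep a d c) ∧
      ∃ G'' : PMG V, SetEdge G G'' b c EMark.arrow EMark.arrow ∧
        SetEdge G'' G' c d EMark.arrow EMark.arrow))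

/-- R8: `a → b → c` or `a —∘ b → c`, and `a ∘→ c` ⟹ `a → c`. -/
def R8Step (G G' : PMG V) : Prop :=
  ∃ a b c, ((G.dirEdge a b ∨ (G.tailAt b a ∧ G.circAt a b)) ∧ G.dirEdge b c) ∧
    G.arrowAt a c ∧ G.circAt c a ∧ SetMark G G' c a EMark.tail

/-- possibly directed path. -/
def PossDirList (G : PMG V) (p : List V) : Prop :=
  p.Chain' (fun x y => G.mark y x ≠ some EMark.arrow ∧ G.mark x y ≠ some EMark.tail)

/-- uncovered path: every consecutive triple is unshielded. -/
def Uncovered (G : PMG V) (p : List V) : Prop :=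
  ∀ x y z, [x, y, z] <:+: p → ¬ G.Adj x z

/-- R9: `a ∘→ c` with an uncovered possibly directed path `⟨a, b, …, c⟩`,
`b` and `c` non-adjacent ⟹ `a → c`. -/
def R9Step (G G' : PMG V) : Prop :=
  ∃ a c b p, G.arrowAt a c ∧ G.circAt c a ∧
    G.PathBtw a c p ∧ PossDirList G p ∧ Uncovered G p ∧
    p[1]? = some b ∧ b ≠ c ∧ ¬ G.Adj b c ∧
    SetMark G G' c a EMark.tail

/-- R10. -/
def R10Step (G G' : PMG V) : Prop :=
  ∃ a b c d m w p₁ p₂, G.arrowAt a c ∧ G.circAt c a ∧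
    G.dirEdge b c ∧ G.dirEdge d c ∧ b ≠ d ∧
    G.PathBtw a b p₁ ∧ PossDirList G p₁ ∧ Uncovered G p₁ ∧ p₁[1]? = some m ∧
    G.PathBtw a d p₂ ∧ PossDirList G p₂ ∧ Uncovered G p₂ ∧ p₂[1]? = some w ∧
    m ≠ w ∧ ¬ G.Adj m w ∧
    SetMark G G' c a EMark.tail

/-- One application of any of the rules R1–R4, R8–R10. -/
def RuleStep (hasSep : V → V → Prop) (inSep : V → V → V → Prop) (G G' : PMG V) : Prop :=
  R1Step G G' ∨ R2Step G G' ∨ R3Step G G' ∨ R4Step hasSep inSep G G' ∨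
  R8Step G G' ∨ R9Step G G' ∨ R10Step G G'

/-- `H` is obtained from `G` by applying R1–R4, R8–R10 until none applies. -/
def RuleClosure (hasSep : V → V → Prop) (inSep : V → V → V → Prop) (G H : PMG V) : Prop :=
  Relation.ReflTransGen (RuleStep hasSep inSep) G H ∧ ∀ H', ¬ RuleStep hasSep inSep H H'

/-! ### algorithm phases -/

/-- orientation of v-structures, either from recorded separating sets or from the
tiered ordering (middle node in a strictly later tier than both endpoints). -/
def VOrient (τ : V → ℕ) (sepdef : V → V → Prop) (sep : V → V → Set V)
    (G H : PMG V) : Prop :=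
  PMG.sameSkel G H ∧
  ∀ a b, G.Adj a b →
    (H.arrowAt a b ↔ ∃ c, UnshTriple G a b c ∧
        (max (τ a) (τ c) < τ b ∨ (sepdef a c ∧ b ∉ sep a c))) ∧
    (¬ H.arrowAt a b → H.mark a b = G.mark a b)

/-- orient every remaining cross-tier edge `a ∗—∘ b` with `τ a < τ b` as `a ∗→ b`. -/
def TierOrient (τ : V → ℕ) (G H : PMG V) : Prop :=
  PMG.sameSkel G H ∧
  ∀ a b, ((τ a < τ b ∧ G.circAt a b) → H.arrowAt a b) ∧
    (¬ (τ a < τ b ∧ G.circAt a b) → H.mark a b = G.mark a b)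

/-- `H` is `G` with the edges in `E'` removed (marks preserved otherwise). -/
def EdgeDeletion (G H : PMG V) (E' : Set (V × V)) : Prop :=
  (∀ a b, H.Adj a b ↔ (G.Adj a b ∧ (a, b) ∉ E' ∧ (b, a) ∉ E')) ∧
  (∀ a b, H.Adj a b → H.mark a b = G.mark a b)

/-- `K` is `H` with exactly the triples in `T` oriented as v-structures. -/
def OrientTriples (H K : PMG V) (T : Set (V × V × V)) : Prop :=
  PMG.sameSkel H K ∧
  ∀ a b, H.Adj a b →
    (K.arrowAt a b ↔ (H.arrowAt a b ∨ ∃ c, (a, b, c) ∈ T ∨ (c, b, a) ∈ T)) ∧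
    (¬ K.arrowAt a b → K.mark a b = H.mark a b)

/-- `M` is obtained from the partial mixed graph `G'` by orienting every
`∘→` edge as `→` and orienting the circle subgraph as a DAG with no new
v-structures (lines 59–64 of the tIOD algorithm). -/
def Completes (G' M : PMG V) : Prop :=
  PMG.sameSkel G' M ∧ M.NoCircles ∧
  (∀ a b, G'.arrowAt a b → M.arrowAt a b) ∧
  (∀ a b, G'.tailAt a b → M.tailAt a b) ∧
  (∀ a b, G'.arrowAt a b → G'.circAt b a → M.tailAt b a) ∧
  (∀ a b, G'.circAt a b → G'.circAt b a → (M.dirEdge a b ∨ M.dirEdge b a)) ∧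
  (∀ a, ¬ Relation.TransGen (fun x y => G'.circAt x y ∧ G'.circAt y x ∧ M.dirEdge x y) a a) ∧
  (∀ x y z, UnshTriple M x y z → M.Collider x y z → G'.Collider x y z)

/-- a conditional-independence oracle Markov and faithful to the MAG `M`. -/
def Faithful1 (indep : V → V → Set V → Prop) (M : PMG V) : Prop :=
  ∀ a b (S : Set V), a ≠ b → a ∉ S → b ∉ S → (indep a b S ↔ M.MSep a b S)

/-- oracles over the overlapping datasets, each Markov and faithful to the
marginal independence model of the MAG `M`. -/
def FaithfulTo {n : ℕ} (indep : Fin n → V → V → Set V → Prop)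
    (Vs : Fin n → Set V) (M : PMG V) : Prop :=
  ∀ i a b (S : Set V), a ∈ Vs i → b ∈ Vs i → S ⊆ Vs i → a ≠ b → a ∉ S → b ∉ S →
    (indep i a b S ↔ M.MSep a b S)

/-! ### the tFCI algorithm (relational specification of its phases) -/

/-- The phases of the (simple/full) tFCI algorithm, specified relationally:
`skel` is the graph after the adjacency-search phase (line 11), `vor` after the
first v-structure orientation (line 16), `skel2` after the Possible-D-SEP
removal phase (line 22, circles restored), `vor2` after the second v-structure
orientation (line 28); `sepdef`/`sep` record the separating sets.  All
separating-set searches are restricted to the past relative to `τ`. -/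
structure TFCIPhases (V : Type) (indep : V → V → Set V → Prop) (τ : V → ℕ) where
  skel : PMG V
  vor : PMG V
  skel2 : PMG V
  vor2 : PMG V
  sepdef : V → V → Prop
  sep : V → V → Set V
  skel_circles : ∀ a b, skel.Adj a b → skel.circAt a b
  skel_spec : ∀ a b, a ≠ b →
    (¬ skel.Adj a b ↔ ∃ S : Set V,
      (S ⊆ (skel.adjSet a ∩ past τ a) \ {a, b} ∨
       S ⊆ (skel.adjSet b ∩ past τ b) \ {a, b}) ∧ indep a b S)
  vor_spec : VOrient τ sepdef sep skel vor
  skel2_circles : ∀ a b, skel2.Adj a b → skel2.circAt a b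
  skel2_spec : ∀ a b, a ≠ b →
    (skel2.Adj a b ↔ vor.Adj a b ∧ ¬ ∃ S : Set V,
      (S ⊆ (pds vor a b ∩ past2 τ a b) \ {a, b} ∨
       S ⊆ (pds vor b a ∩ past2 τ a b) \ {a, b}) ∧ indep a b S)
  sepdef_spec : ∀ a b, sepdef a b ↔ (a ≠ b ∧ ¬ skel2.Adj a b)
  sep_spec : ∀ a b, sepdef a b →
    indep a b (sep a b) ∧ sep a b ⊆ past2 τ a b \ {a, b}
  vor2_spec : VOrient τ sepdef sep skel2 vor2

/-- output of the simple tFCI: apply R1–R4, R8–R10 to the graph of line 28. -/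
def SimpleTFCIOut {indep : V → V → Set V → Prop} {τ : V → ℕ}
    (R : TFCIPhases V indep τ) (out : PMG V) : Prop :=
  RuleClosure R.sepdef (fun a b c => c ∈ R.sep a b) R.vor2 out

/-- output of the full tFCI: additionally orient all remaining cross-tier edges
before applying R1–R4, R8–R10. -/
def FullTFCIOut {indep : V → V → Set V → Prop} {τ : V → ℕ}
    (R : TFCIPhases V indep τ) (out : PMG V) : Prop :=
  ∃ t, TierOrient τ R.vor2 t ∧
    RuleClosure R.sepdef (fun a b c => c ∈ R.sep a b) t out

/-! ### the tIOD algorithm (relational specification) -/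

/-- The first phase (lines 1–32) of the simple tIOD algorithm, specified
relationally: per-dataset graphs `Gi` with separating sets `sep` (searches
restricted to the past relative to `τ`), recorded inducing-path facts `IP`,
and the joint graph `G`.  The IOD algorithm without background knowledge is the
special case of the constant tiered ordering. -/
structure TIODRun (V : Type) (n : ℕ) (Vs : Fin n → Set V)
    (indep : Fin n → V → V → Set V → Prop) (τ : V → ℕ) where
  Gi : Fin n → PMG V
  sepdef : Fin n → V → V → Prop
  sep : Fin n → V → V → Set V
  IP : Fin n → V → V → Prop
  G : PMG V
  Gi_support : ∀ i a b, (Gi i).Adj a b → a ∈ Vs i ∧ b ∈ Vs i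
  Gi_spec : ∀ i a b, a ∈ Vs i → b ∈ Vs i → a ≠ b →
    (¬ (Gi i).Adj a b ↔ ∃ S : Set V,
      (S ⊆ ((Gi i).adjSet a ∩ past τ a) \ {a, b} ∨
       S ⊆ ((Gi i).adjSet b ∩ past τ b) \ {a, b} ∨
       S ⊆ (pds (Gi i) a b ∩ past2 τ a b) \ {a, b} ∨
       S ⊆ (pds (Gi i) b a ∩ past2 τ a b) \ {a, b}) ∧ indep i a b S)
  sepdef_spec : ∀ i a b,
    sepdef i a b ↔ (a ∈ Vs i ∧ b ∈ Vs i ∧ a ≠ b ∧ ¬ (Gi i).Adj a b)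
  sep_spec : ∀ i a b, sepdef i a b →
    indep i a b (sep i a b) ∧ sep i a b ⊆ (Vs i ∩ past2 τ a b) \ {a, b}
  IP_spec : ∀ i a b, IP i a b ↔ (a ≠ b ∧ (Gi i).Adj a b)
  Gi_vstruct : ∀ i a b, (Gi i).Adj a b →
    ((Gi i).arrowAt a b ↔ ∃ c, UnshTriple (Gi i) a b c ∧
        (max (τ a) (τ c) < τ b ∨ (sepdef i a c ∧ b ∉ sep i a c))) ∧
    (¬ (Gi i).arrowAt a b → (Gi i).circAt a b)
  G_adj : ∀ a b, G.Adj a b ↔ (a ≠ b ∧ ∀ i, a ∈ Vs i → b ∈ Vs i → (Gi i).Adj a b)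
  G_marks : ∀ a b, G.Adj a b →
    (G.arrowAt a b ↔ ∃ i c, UnshTriple (Gi i) a b c ∧
        (max (τ a) (τ c) < τ b ∨ (sepdef i a c ∧ b ∉ sep i a c))) ∧
    (¬ G.arrowAt a b → G.circAt a b)

namespace TIODRun

variable {V : Type} {n : ℕ} {Vs : Fin n → Set V}
  {indep : Fin n → V → V → Set V → Prop} {τ : V → ℕ}

/-- the set `RemoveEdge` (lines 33–37 of the tIOD algorithm). -/
def REset (R : TIODRun V n Vs indep τ) : Set (V × V) :=
  {e | R.G.Adj e.1 e.2 ∧ ∀ i,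
    ¬ (({e.1, e.2} ∪ (R.G.adjSet e.1 ∩ past τ e.1) ∪
        ((pds R.G e.1 e.2 ∪ pds R.G e.2 e.1) ∩ past2 τ e.1 e.2)) ⊆ Vs i) ∧
    ¬ (({e.1, e.2} ∪ (R.G.adjSet e.2 ∩ past τ e.2) ∪
        ((pds R.G e.1 e.2 ∪ pds R.G e.2 e.1) ∩ past2 τ e.1 e.2)) ⊆ Vs i)}

/-- a triple `⟨x, y, z⟩` that can be oriented as a v-structure in `H` and whose
status cannot be decided from the recorded separating sets. -/
def VCand (R : TIODRun V n Vs indep τ) (H : PMG V) (x y z : V) : Prop :=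
  UnshTriple H x y z ∧ H.mark x y ≠ some EMark.tail ∧ H.mark z y ≠ some EMark.tail ∧
  ∀ i, y ∉ Vs i ∨ ¬ R.sepdef i x z

/-- v-structures forced by the tiered ordering (line 42). -/
def ForcedVs (R : TIODRun V n Vs indep τ) (H : PMG V) : Set (V × V × V) :=
  {t | R.VCand H t.1 t.2.1 t.2.2 ∧ max (τ t.1) (τ t.2.2) < τ t.2.1}

/-- the set `OrientVstructure` (line 44). -/
def OVsetOf (R : TIODRun V n Vs indep τ) (H : PMG V) : Set (V × V × V) :=
  {t | R.VCand H t.1 t.2.1 t.2.2 ∧ ¬ max (τ t.1) (τ t.2.2) < τ t.2.1}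

def OVset (R : TIODRun V n Vs indep τ) : Set (V × V × V) := R.OVsetOf R.G

/-- the number of candidate graphs enumerated (visited) by the algorithm. -/
noncomputable def visitedCount (R : TIODRun V n Vs indep τ) : ℕ :=
  2 ^ ((R.REset).ncard + (R.OVset).ncard)

/-- a candidate graph arising from a choice of edge removals (a subset of
`RemoveEdge`) and v-structure orientations (tier-forced ones plus a subset of
`OrientVstructure`). -/
def Candidate (R : TIODRun V n Vs indep τ) (K : PMG V) : Prop :=
  ∃ E' ⊆ R.REset, ∃ H, EdgeDeletion R.G H E' ∧
    ∃ T : Set (V × V × V), R.ForcedVs H ⊆ T ∧ T ⊆ R.ForcedVs H ∪ R.OVsetOf H ∧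
      OrientTriples H K T

def hasSepJ (R : TIODRun V n Vs indep τ) (a b : V) : Prop := ∃ i, R.sepdef i a b

def inSepJ (R : TIODRun V n Vs indep τ) (a b c : V) : Prop :=
  ∃ i, R.sepdef i a b ∧ c ∈ R.sep i a b

/-- `G'` is reached by orienting a candidate graph with rules R1–R4, R8–R10. -/
def Reaches (R : TIODRun V n Vs indep τ) (G' : PMG V) : Prop :=
  ∃ K, R.Candidate K ∧ RuleClosure R.hasSepJ R.inSepJ K G'

/-- the checks of line 65 for the candidate MAG `Mc` completed from `G'`. -/
def PassesChecks (R : TIODRun V n Vs indep τ) (G' Mc : PMG V) : Prop :=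
  Completes G' Mc ∧ Mc.IsMAG ∧
  (∀ i a b, R.sepdef i a b → Mc.MSep a b (R.sep i a b)) ∧
  (∀ i a b, R.IP i a b → ∃ p, Mc.InducingPathRel (Set.univ \ Vs i) a b p) ∧
  (∀ a b, a ≠ b → ¬ Mc.Adj a b → ∃ S : Set V, S ⊆ past2 τ a b ∧ Mc.MSep a b S)

/-- the output set `𝒢` of the simple tIOD algorithm. -/
def Outputs (R : TIODRun V n Vs indep τ) (G' : PMG V) : Prop :=
  R.Reaches G' ∧ ∃ Mc, R.PassesChecks G' Mc

/-- the output set of the full tIOD algorithm (lines 67–72): orient all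
remaining cross-tier edges and re-apply R1–R4, R8–R10. -/
def FullOutputs (R : TIODRun V n Vs indep τ) (G'' : PMG V) : Prop :=
  ∃ G' t, R.Outputs G' ∧ TierOrient τ G' t ∧ RuleClosure R.hasSepJ R.inSepJ t G''

end TIODRun


/-- m-connection is symmetric (reverse the path). -/
lemma mconn_symm {V : Type} (G : PMG V) {a b : V} {S : Set V}
    (h : G.MConn a b S) : G.MConn b a S := by
  obtain ⟨p, ⟨⟨hlen, hnd, hch⟩, hhead, hlast⟩, hmc⟩ := h
  refine ⟨p.reverse, ⟨⟨by simpa using hlen, by simpa using hnd, ?_⟩,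
    by simpa using hlast, by simpa using hhead⟩, ?_⟩
  · apply List.isChain_reverse.mpr
    refine hch.imp ?_
    intro x y hxy
    show G.Adj y x
    exact (G.symm_adj x y).mp hxy
  · intro x y z hinf
    have hinf' : [z, y, x] <:+: p := by
      rw [← List.reverse_infix]
      simpa using hinf
    obtain ⟨h1, h2⟩ := hmc z y x hinf'
    constructor
    · intro hc
      exact h1 ⟨hc.2, hc.1⟩
    · intro hc
      exact h2 (fun hc' => hc ⟨hc'.2, hc'.1⟩)

/-- core induction: an m-connecting path (given pa(A)) that has started to go
forward from `A` yields `A` an ancestor of `B` or a directed cycle. -/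
lemma core_ind {V : Type} (G : PMG V) (hG : G.IsDAG) (A B : V)
    (hnAnc : ¬ G.Anc A B) :
    ∀ (r : List V) (x y : V), G.dirEdge x y → G.Anc A x →
      (x :: y :: r).Chain' G.Adj → (x :: y :: r).getLast? = some B →
      (∀ u v w, [u, v, w] <:+: (x :: y :: r) →
        (G.Collider u v w → ∃ d ∈ {d | G.dirEdge d A}, G.Anc v d)) → False := by
  intro r
  induction r with
  | nil =>
    intro x y hxy hAx _ hlast _
    have hyB : y = B := by simpa using hlast
    exact hnAnc (hAx.tail (hyB ▸ hxy))
  | cons z r' ih =>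
    intro x y hxy hAx hch hlast hcol
    have hyz : G.Adj y z := (List.isChain_cons_cons.mp hch.tail).1
    have hAy : G.Anc A y := hAx.tail hxy
    rcases hG.1 y z hyz with hdir | hdir
    · -- non-collider, continue
      exact ih y z hdir hAy hch.tail (by rwa [List.getLast?_cons_cons] at hlast)
        (fun u v w hinf hc => hcol u v w (List.infix_cons hinf) hc)
    · -- collider at y
      have hc : G.Collider x y z := ⟨hxy.1, hdir.1⟩
      obtain ⟨d, hd, hyd⟩ := hcol x y z ⟨[], r', rfl⟩ hc
      have : Relation.TransGen G.dirEdge A A :=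
        Relation.TransGen.tail' ((hAy.trans hyd)) hd
      exact hG.2 A this

/-- if `A` is not an ancestor of `B` and they are nonadjacent, `pa(A)`
d-separates them. -/
lemma msep_pa {V : Type} (G : PMG V) (hG : G.IsDAG) (A B : V)
    (hadj : ¬ G.Adj A B) (hnAnc : ¬ G.Anc A B) :
    G.MSep A B {d | G.dirEdge d A} := by
  rintro ⟨p, ⟨⟨hlen, hnd, hch⟩, hhead, hlast⟩, hmc⟩
  match p, hlen with
  | (a :: c :: r), _ =>
    have ha : a = A := by simpa using hhead
    subst ha
    have hac : G.Adj a c := (List.isChain_cons_cons.mp hch).1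
    rcases hG.1 a c hac with hdir | hdir
    · exact core_ind G hG a B hnAnc r a c hdir Relation.ReflTransGen.refl hch hlast
        (fun u v w hinf hc => (hmc u v w hinf).1 hc)
    · -- edge c → a, so c ∈ pa(a), a non-collider
      match r with
      | [] =>
        have hcB : c = B := by simpa using hlast
        exact hadj (hcB ▸ hac)
      | z :: r' =>
        have hinf : [a, c, z] <:+: (a :: c :: z :: r') := ⟨[], r', rfl⟩
        have hnc : ¬ G.Collider a c z := by
          intro hc
          have h2 : G.mark a c = some EMark.arrow := hc.1
          have h1 : G.mark a c = some EMark.tail := hdir.2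
          rw [h1] at h2
          simp at h2
        have := (hmc a c z hinf).2 hnc
        exact this hdir

/-- In a DAG with a consistent tiered ordering, two distinct nodes
can be d-separated by some subset of `V \ {A,B}` iff they can be d-separated by
a subset of the past of `A` or a subset of the past of `B`. -/
theorem tiered_separation_past_dag
    {V : Type} [Fintype V] (G : PMG V) (hG : G.IsDAG)
    (τ : V → ℕ) (T : ℕ) (hT : IsTiered τ T)
    (hcons : TieredConsistent G τ)
    (A B : V) (hAB : A ≠ B) :
    (∃ S : Set V, A ∉ S ∧ B ∉ S ∧ G.MSep A B S) ↔
      ((∃ S : Set V, S ⊆ past τ A \ {A, B} ∧ G.MSep A B S) ∨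
       (∃ S' : Set V, S' ⊆ past τ B \ {A, B} ∧ G.MSep A B S')) := by
  constructor
  · rintro ⟨S, hA, hB, hsep⟩
    -- A and B are nonadjacent
    have hadj : ¬ G.Adj A B := by
      intro h
      apply hsep
      refine ⟨[A, B], ⟨⟨by simp, by simp [hAB], List.IsChain.cons_cons h (List.IsChain.singleton _)⟩, rfl, rfl⟩, ?_⟩
      intro x y z hinf
      have := hinf.length_le
      simp at this
    have hadj' : ¬ G.Adj B A := fun h => hadj ((G.symm_adj A B).mpr h)
    by_cases hanc : G.Anc A B
    · -- then B is not an ancestor of A; use pa(B) ⊆ past τ B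
      right
      have hnBA : ¬ G.Anc B A := by
        intro h
        rcases (Relation.reflTransGen_iff_eq_or_transGen.mp hanc) with heq | ht
        · exact hAB heq.symm
        · exact hG.2 A (ht.trans_left h)
      refine ⟨{d | G.dirEdge d B}, ?_, ?_⟩
      · intro d hd
        have hd' : G.dirEdge d B := hd
        refine ⟨?_, ?_⟩
        · show τ d ≤ τ B
          by_contra hlt
          exact hcons B d (by omega) hd'
        · simp only [Set.mem_insert_iff, Set.mem_singleton_iff]
          push_neg
          refine ⟨fun h => ?_, fun h => ?_⟩
          · rw [h] at hd'
            exact hadj (by show (G.mark A B).isSome; rw [hd'.1]; rfl)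
          · rw [h] at hd'
            have h2 := hd'.1
            rw [PMG.arrowAt, G.loopless B] at h2
            exact absurd h2 (by simp)
      · intro hconn
        exact msep_pa G hG B A hadj' hnBA (mconn_symm G hconn)
    · -- A not ancestor of B; use pa(A) ⊆ past τ A
      left
      refine ⟨{d | G.dirEdge d A}, ?_, msep_pa G hG A B hadj hanc⟩
      intro d hd
      have hd' : G.dirEdge d A := hd
      refine ⟨?_, ?_⟩
      · show τ d ≤ τ A
        by_contra hlt
        exact hcons A d (by omega) hd'
      · simp only [Set.mem_insert_iff, Set.mem_singleton_iff]
        push_neg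
        refine ⟨fun h => ?_, fun h => ?_⟩
        · rw [h] at hd'
          have h2 := hd'.1
          rw [PMG.arrowAt, G.loopless A] at h2
          exact absurd h2 (by simp)
        · rw [h] at hd'
          exact hadj' (by show (G.mark B A).isSome; rw [hd'.1]; rfl)
  · rintro (⟨S, hS, hsep⟩ | ⟨S, hS, hsep⟩) <;>
    · refine ⟨S, ?_, ?_, hsep⟩ <;> intro h <;> have := hS h <;>
        simp [Set.mem_diff] at this <;> tauto

end Tiered
end

section
/- Let G = (V,E) be a maximal ancestral graph (MAG), let τ be a tiered ordering of V consistent with G, and let A, B ∈ V be two distinct nodes. Then A and B are m-separated in G by some subset of V \ {A,B} if and only if they are m-separated by some set S ⊆ past^τ_V(A) \ {A,B} or by some set S' ⊆ past^τ_V(B) \ {A,B}. -/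
namespace Tiered

variable {V : Type}

section Aux

variable {V : Type}

/-- adjacent nodes are m-connected given every set. -/
lemma mconn_of_adj {G : PMG V} {A B : V} (hAB : A ≠ B) (hadj : G.Adj A B)
    (S : Set V) : G.MConn A B S := by
  refine ⟨[A, B], ⟨⟨by simp, by simp [hAB], List.isChain_pair.mpr hadj⟩, by simp, by simp⟩, ?_⟩
  intro x y z h
  have := h.length_le
  simp at this

/-- ancestors move down (or stay) in the tiered ordering. -/
lemma anc_tau_le {G : PMG V} {τ : V → ℕ} (hcons : TieredConsistent G τ)
    {a b : V} (h : G.Anc a b) : τ a ≤ τ b := by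
  induction h with
  | refl => exact le_refl _
  | tail h₁ h₂ ih =>
    have : ¬ τ _ < τ _ := fun hlt => hcons _ _ hlt h₂
    omega

/-- in a mixed graph, a non-collider has a directed edge out of it along the path. -/
lemma noncol_out {G : PMG V} (hmix : G.MixedEdges) {x y z : V}
    (hxy : G.Adj x y) (hyz : G.Adj y z) (hnc : ¬ G.Collider x y z) :
    G.dirEdge y x ∨ G.dirEdge y z := by
  by_cases harr : G.arrowAt x y
  · right
    have hzy : ¬ G.arrowAt z y := fun h => hnc ⟨harr, h⟩
    rcases hmix y z hyz with h | h | h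
    · exact h
    · exact absurd h.1 hzy
    · exact absurd h.2 hzy
  · left
    rcases hmix x y hxy with h | h | h
    · exact absurd h.1 harr
    · exact h
    · exact absurd h.1 harr

lemma mconn_reverse {G : PMG V} {S : Set V} {p : List V}
    (h : G.MConnPath S p) : G.MConnPath S p.reverse := by
  intro x y z hinf
  have h' : [z, y, x] <:+: p := by
    have := List.reverse_infix.mpr hinf
    simpa using this
  exact ⟨fun hc => (h z y x h').1 ⟨hc.2, hc.1⟩,
    fun hnc => (h z y x h').2 fun hc => hnc ⟨hc.2, hc.1⟩⟩

lemma interior_ne_head {p : List V} {A : V} (hnd : p.Nodup)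
    (hh : p.head? = some A) {x y z : V} (hinf : [x, y, z] <:+: p) : y ≠ A := by
  obtain ⟨s, t, hst⟩ := hinf
  subst hst
  cases s with
  | nil =>
    simp only [List.nil_append, List.cons_append, List.head?_cons,
      Option.some.injEq] at hh
    subst hh
    simp at hnd
    exact fun h => hnd.1.1 h.symm
  | cons a s' =>
    simp only [List.cons_append, List.head?_cons, Option.some.injEq] at hh
    subst hh
    simp at hnd
    exact fun h => hnd.1.2.2.1 h.symm

/-- the chase lemma: if a node on an m-connecting path (given a set of
ancestors of `A` or `B`) emits a directed edge towards the head of the path,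
it is an ancestor of `A` or of `B`. -/
lemma chase {G : PMG V} (hmix : G.MixedEdges) {A B E : V} {S : Set V}
    (hS : ∀ d ∈ S, G.Anc d A ∨ G.Anc d B)
    {q : List V} (hconn : G.MConnPath S q) (hchain : q.Chain' G.Adj)
    (hhead : q.head? = some E) (hE : G.Anc E A ∨ G.Anc E B) :
    ∀ (pre : List V) (x y : V), pre ++ [x, y] <+: q → G.dirEdge y x →
      G.Anc y A ∨ G.Anc y B := by
  intro pre
  induction pre using List.reverseRecOn with
  | nil =>
    intro x y hpre hdir
    obtain ⟨t, ht⟩ := hpre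
    have hx : x = E := by
      rw [← ht] at hhead
      simpa using hhead
    subst hx
    rcases hE with h | h
    · exact Or.inl (Relation.ReflTransGen.head hdir h)
    · exact Or.inr (Relation.ReflTransGen.head hdir h)
  | append_singleton pre' w ih =>
    intro x y hpre hdir
    obtain ⟨t, ht⟩ := hpre
    have h3 : [w, x, y] <:+: q := ⟨pre', t, by rw [← ht]; simp⟩
    by_cases harr : G.arrowAt w x
    · obtain ⟨d, hdS, hxd⟩ := (hconn w x y h3).1 ⟨harr, hdir.1⟩
      rcases hS d hdS with h | h
      · exact Or.inl (Relation.ReflTransGen.head hdir (hxd.trans h))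
      · exact Or.inr (Relation.ReflTransGen.head hdir (hxd.trans h))
    · have hcinf : List.Chain' G.Adj [w, x, y] := hchain.infix h3
      have hadjwx : G.Adj w x := (List.isChain_cons_cons.mp hcinf).1
      have hdxw : G.dirEdge x w := by
        rcases hmix w x hadjwx with h | h | h
        · exact absurd h.1 harr
        · exact h
        · exact absurd h.1 harr
      have := ih w x ⟨y :: t, by rw [← ht]; simp⟩ hdxw
      rcases this with h | h
      · exact Or.inl (Relation.ReflTransGen.head hdir h)
      · exact Or.inr (Relation.ReflTransGen.head hdir h)

/-- a MAG m-separates non-adjacent nodes by the set of (strict) ancestors of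
the pair. -/
lemma msep_anc (G : PMG V) (hG : G.IsMAG) {A B : V} (hAB : A ≠ B)
    (hnadj : ¬ G.Adj A B) :
    G.MSep A B {v | v ≠ A ∧ v ≠ B ∧ (G.Anc v A ∨ G.Anc v B)} := by
  set S : Set V := {v | v ≠ A ∧ v ≠ B ∧ (G.Anc v A ∨ G.Anc v B)} with hSdef
  have hS : ∀ d ∈ S, G.Anc d A ∨ G.Anc d B := fun d hd => hd.2.2
  intro hconn
  obtain ⟨p, ⟨⟨hlen, hnd, hch⟩, hhd, hlast⟩, hpc⟩ := hconn
  apply hG.2.2 A B hAB hnadj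
  refine ⟨p, ⟨⟨⟨hlen, hnd, hch⟩, hhd, hlast⟩, ?_⟩⟩
  intro x y z hinf
  obtain ⟨s, t, hst⟩ := id hinf
  have hrev : p.reverse = t.reverse ++ [z, y, x] ++ s.reverse := by
    rw [← hst]; simp
  have hinfrev : [z, y, x] <:+: p.reverse := ⟨t.reverse, s.reverse, hrev.symm⟩
  have hheadrev : p.reverse.head? = some B := by
    rw [List.head?_reverse]; exact hlast
  have hyA : y ≠ A := interior_ne_head hnd hhd hinf
  have hyB : y ≠ B :=
    interior_ne_head (List.nodup_reverse.mpr hnd) hheadrev hinfrev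
  have hcol : G.Collider x y z := by
    by_contra hnc
    have hyS : y ∉ S := (hpc x y z hinf).2 hnc
    have hyanc : ¬ (G.Anc y A ∨ G.Anc y B) := fun h => hyS ⟨hyA, hyB, h⟩
    have hcinf : List.Chain' G.Adj [x, y, z] := hch.infix hinf
    have hadjxy : G.Adj x y := (List.isChain_cons_cons.mp hcinf).1
    have hadjyz : G.Adj y z :=
      (List.isChain_cons_cons.mp (List.isChain_cons_cons.mp hcinf).2).1
    rcases noncol_out hG.1 hadjxy hadjyz hnc with hd | hd
    · exact hyanc (chase hG.1 hS hpc hch hhd (Or.inl Relation.ReflTransGen.refl)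
        s x y ⟨z :: t, by rw [← hst]; simp⟩ hd)
    · have hchrev : p.reverse.Chain' G.Adj := by
        refine List.isChain_reverse.mpr ?_
        exact hch.imp fun a b h => (G.symm_adj a b).mp h
      exact hyanc (chase hG.1 hS (mconn_reverse hpc) hchrev hheadrev
        (Or.inr Relation.ReflTransGen.refl)
        t.reverse z y ⟨x :: s.reverse, by rw [hrev]; simp⟩ hd)
  refine ⟨hcol, ?_⟩
  obtain ⟨d, hdS, hyd⟩ := (hpc x y z hinf).1 hcol
  rcases hS d hdS with h | h
  · exact Or.inl (hyd.trans h)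
  · exact Or.inr (hyd.trans h)

end Aux

/-- In a MAG with a consistent tiered ordering, two distinct nodes
can be m-separated by some subset of `V \ {A,B}` iff they can be m-separated by
a subset of the past of `A` or a subset of the past of `B`. -/
theorem tiered_separation_past_mag
    {V : Type} [Fintype V] (G : PMG V) (hG : G.IsMAG)
    (τ : V → ℕ) (T : ℕ) (hT : IsTiered τ T)
    (hcons : TieredConsistent G τ)
    (A B : V) (hAB : A ≠ B) :
    (∃ S : Set V, A ∉ S ∧ B ∉ S ∧ G.MSep A B S) ↔
      ((∃ S : Set V, S ⊆ past τ A \ {A, B} ∧ G.MSep A B S) ∨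
       (∃ S' : Set V, S' ⊆ past τ B \ {A, B} ∧ G.MSep A B S')) := by
  constructor
  · rintro ⟨S, hA, hB, hsep⟩
    have hnadj : ¬ G.Adj A B := fun hadj => hsep (mconn_of_adj hAB hadj S)
    have hsep' := msep_anc G hG hAB hnadj
    by_cases hτ : τ A ≤ τ B
    · refine Or.inr ⟨_, ?_, hsep'⟩
      rintro v ⟨hvA, hvB, hanc⟩
      refine ⟨?_, by simp [hvA, hvB]⟩
      rcases hanc with h | h
      · exact le_trans (anc_tau_le hcons h) hτ
      · exact anc_tau_le hcons h
    · refine Or.inl ⟨_, ?_, hsep'⟩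
      rintro v ⟨hvA, hvB, hanc⟩
      refine ⟨?_, by simp [hvA, hvB]⟩
      rcases hanc with h | h
      · exact anc_tau_le hcons h
      · exact le_trans (anc_tau_le hcons h) (le_of_not_ge hτ)
  · rintro (⟨S, hsub, hsep⟩ | ⟨S, hsub, hsep⟩) <;>
      exact ⟨S, fun h => ((hsub h).2 (by simp)), fun h => ((hsub h).2 (by simp)),
        hsep⟩

end Tiered
end
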